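/- arXiv:1508.04158 — 8 statements merged into one kernel-verified Lean document; each statement's English description precedes it below -/
import Mathlib

section
/- Let (Ω, 𝒜, μ) be a σ-finite measure space, let I be a nonempty finite index set, let f_i (i ∈ I) be μ-a.e. strictly positive probability densities with respect to μ, and let ω_i > 0 be scalars with ∑_{i∈I} ω_i = 1. Assume c := ∫ ∏_{i∈I} f_i(x)^{ω_i} dμ(x) satisfies 0 < c < ∞, and define f̄(x) := (1/c) ∏_{i∈I} f_i(x)^{ω_i}. Then for every μ-a.e. strictly positive probability density f with respect to μ for which each divergence D_KL(f‖f_i) (i ∈ I) and D_KL(f‖f̄) is well defined, one has the identity ∑_{i∈I} ω_i D_KL(f‖f_i) = D_KL(f‖f̄) − log c. -/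
open MeasureTheory

/-! Pointwise, `log f̄ = ∑ ωᵢ log fᵢ - log c` and `∑ ωᵢ = 1`, so the weighted sum of the integrands
`g log (g / fᵢ)` equals `g log (g / f̄) - g log c`; integrating and using `∫ g = 1` gives the identity. -/

theorem Real.log_prod_rpow {ι : Type*} {s : Finset ι} {b ω : ι → ℝ} (hb : ∀ i ∈ s, 0 < b i) :
    Real.log (∏ i ∈ s, b i ^ ω i) = ∑ i ∈ s, ω i * Real.log (b i) := by
  rw [Real.log_prod fun i hi => (Real.rpow_pos_of_pos (hb i hi) _).ne']
  exact Finset.sum_congr rfl fun i hi => Real.log_rpow (hb i hi) _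

theorem Real.sum_mul_mul_log_div_eq {ι : Type*} {s : Finset ι} {b ω : ι → ℝ} (a : ℝ) {c : ℝ}
    (hb : ∀ i ∈ s, 0 < b i) (hω : ∑ i ∈ s, ω i = 1) (hc : c ≠ 0) :
    ∑ i ∈ s, ω i * (a * Real.log (a / b i))
      = a * Real.log (a / ((∏ i ∈ s, b i ^ ω i) / c)) - a * Real.log c := by
  rcases eq_or_ne a 0 with rfl | ha
  · simp
  have hprod : 0 < ∏ i ∈ s, b i ^ ω i :=
    Finset.prod_pos fun i hi => Real.rpow_pos_of_pos (hb i hi) _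
  have hlog_mean : Real.log (a / ((∏ i ∈ s, b i ^ ω i) / c))
      = Real.log a - ∑ i ∈ s, ω i * Real.log (b i) + Real.log c := by
    rw [Real.log_div ha (div_ne_zero hprod.ne' hc), Real.log_div hprod.ne' hc,
      Real.log_prod_rpow hb]
    ring
  calc ∑ i ∈ s, ω i * (a * Real.log (a / b i))
      = ∑ i ∈ s, (ω i * (a * Real.log a) - a * (ω i * Real.log (b i))) :=
        Finset.sum_congr rfl fun i hi => by rw [Real.log_div ha (hb i hi).ne']; ring
    _ = (∑ i ∈ s, ω i) * (a * Real.log a) - a * ∑ i ∈ s, ω i * Real.log (b i) := by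
        rw [Finset.sum_sub_distrib, ← Finset.sum_mul, ← Finset.mul_sum]
    _ = a * Real.log (a / ((∏ i ∈ s, b i ^ ω i) / c)) - a * Real.log c := by
        rw [hω, hlog_mean]; ring

theorem weighted_KL_cost_identity_general
    {Ω : Type*} [MeasurableSpace Ω] (μ : Measure Ω)
    {I : Type*} [Fintype I]
    (f : I → Ω → ℝ)
    (hpos : ∀ i, ∀ᵐ x ∂μ, 0 < f i x)
    (ω : I → ℝ) (hωs : ∑ i, ω i = 1)
    (c : ℝ)
    (hcpos : 0 < c)
    (fbar : Ω → ℝ) (hfbar : ∀ x, fbar x = (∏ i, f i x ^ ω i) / c) :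
    ∀ g : Ω → ℝ, Measurable g → (∀ x, 0 ≤ g x) → (∀ᵐ x ∂μ, 0 < g x) →
      (∫ x, g x ∂μ) = 1 →
      (∀ i, Integrable (fun x => g x * Real.log (g x / f i x)) μ) →
      Integrable (fun x => g x * Real.log (g x / fbar x)) μ →
      ∑ i, ω i * ∫ x, g x * Real.log (g x / f i x) ∂μ
        = (∫ x, g x * Real.log (g x / fbar x) ∂μ) - Real.log c := by
  intro g _ _ _ hgint hKL hKLbar
  have hg : Integrable g μ := Integrable.of_integral_ne_zero (by rw [hgint]; exact one_ne_zero)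
  have hpointwise : ∀ᵐ x ∂μ, ∑ i, ω i * (g x * Real.log (g x / f i x))
      = g x * Real.log (g x / fbar x) - g x * Real.log c := by
    filter_upwards [ae_all_iff.2 hpos] with x hfx
    rw [hfbar]
    exact Real.sum_mul_mul_log_div_eq (g x) (fun i _ => hfx i) hωs hcpos.ne'
  calc ∑ i, ω i * ∫ x, g x * Real.log (g x / f i x) ∂μ
      = ∫ x, ∑ i, ω i * (g x * Real.log (g x / f i x)) ∂μ := by
        rw [integral_finsetSum _ fun i _ => (hKL i).const_mul _]
        simp only [integral_const_mul]
    _ = (∫ x, g x * Real.log (g x / fbar x) ∂μ) - (∫ x, g x ∂μ) * Real.log c := by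
        rw [integral_congr_ae hpointwise, integral_sub hKLbar (hg.mul_const _),
          integral_mul_const]
    _ = (∫ x, g x * Real.log (g x / fbar x) ∂μ) - Real.log c := by rw [hgint, one_mul]

/-- the weighted Kullback-Leibler cost decomposes as
`∑ ωᵢ D(f‖fᵢ) = D(f‖f̄) − log c` where `f̄ = (1/c) ∏ fᵢ^ωᵢ`. -/
theorem weighted_KL_cost_identity
    {Ω : Type*} [MeasurableSpace Ω] (μ : Measure Ω) [SigmaFinite μ]
    {I : Type*} [Fintype I] [Nonempty I]
    (f : I → Ω → ℝ)
    (hmeas : ∀ i, Measurable (f i))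
    (hnn : ∀ i x, 0 ≤ f i x)
    (hpos : ∀ i, ∀ᵐ x ∂μ, 0 < f i x)
    (hone : ∀ i, ∫ x, f i x ∂μ = 1)
    (ω : I → ℝ) (hω : ∀ i, 0 < ω i) (hωs : ∑ i, ω i = 1)
    (c : ℝ) (hc : c = ∫ x, ∏ i, f i x ^ ω i ∂μ)
    (hcpos : 0 < c)
    (hcfin : Integrable (fun x => ∏ i, f i x ^ ω i) μ)
    (fbar : Ω → ℝ) (hfbar : ∀ x, fbar x = (∏ i, f i x ^ ω i) / c) :
    ∀ g : Ω → ℝ, Measurable g → (∀ x, 0 ≤ g x) → (∀ᵐ x ∂μ, 0 < g x) →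
      (∫ x, g x ∂μ) = 1 →
      (∀ i, Integrable (fun x => g x * Real.log (g x / f i x)) μ) →
      Integrable (fun x => g x * Real.log (g x / fbar x)) μ →
      ∑ i, ω i * ∫ x, g x * Real.log (g x / f i x) ∂μ
        = (∫ x, g x * Real.log (g x / fbar x) ∂μ) - Real.log c :=
  weighted_KL_cost_identity_general μ f hpos ω hωs c hcpos fbar hfbar
end

section
/- Kullback–Leibler average of PMFs: let R be a nonempty finite set, let I be a nonempty finite index set, let μ_i (i ∈ I) be strictly positive PMFs on R, and let ω_i ≥ 0 be scalars with ∑_{i∈I} ω_i = 1. Define c := ∑_{t∈R} ∏_{i∈I} μ_i(t)^{ω_i} and μ̄(j) := (1/c) ∏_{i∈I} μ_i(j)^{ω_i} for j ∈ R. Then μ̄ is a strictly positive PMF on R, and for every strictly positive PMF μ on R one has ∑_{i∈I} ω_i D_KL(μ‖μ_i) ≥ −log c, with equality if and only if μ = μ̄; in particular μ̄ is the unique minimizer of μ ↦ ∑_{i∈I} ω_i D_KL(μ‖μ_i) over strictly positive PMFs on R. -/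
/-!
Taking logarithms, `∑ i, ω i * log (ν j / μ i j) = log (ν j / μ̄ j) - log c` for each `j`, because
the weights sum to one. Averaging over `ν` turns the weighted KL cost into `D_KL(ν‖μ̄) - log c`,
and Gibbs' inequality `D_KL(ν‖μ̄) ≥ 0`, with equality only at `ν = μ̄`, finishes the proof.
-/

open Real Finset

noncomputable def discreteKL {R : Type*} [Fintype R] (ν m : R → ℝ) : ℝ :=
  ∑ j, ν j * log (ν j / m j)

section Gibbs

variable {R : Type*} [Fintype R] {ν m : R → ℝ}

lemma mul_klFun_div {x y : ℝ} (hy : y ≠ 0) :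
    y * InformationTheory.klFun (x / y) = x * log (x / y) + y - x := by
  rw [InformationTheory.klFun_apply]
  field_simp

lemma discreteKL_eq_sum_mul_klFun (hm : ∀ j, 0 < m j) (hsum : ∑ j, ν j = ∑ j, m j) :
    discreteKL ν m = ∑ j, m j * InformationTheory.klFun (ν j / m j) := by
  simp only [mul_klFun_div (hm _).ne', sum_sub_distrib, sum_add_distrib, hsum, discreteKL]
  ring

lemma discreteKL_nonneg (hν : ∀ j, 0 ≤ ν j) (hm : ∀ j, 0 < m j)
    (hsum : ∑ j, ν j = ∑ j, m j) : 0 ≤ discreteKL ν m := by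
  rw [discreteKL_eq_sum_mul_klFun hm hsum]
  exact sum_nonneg fun j _ ↦
    mul_nonneg (hm j).le (InformationTheory.klFun_nonneg (div_nonneg (hν j) (hm j).le))

lemma discreteKL_eq_zero_iff (hν : ∀ j, 0 ≤ ν j) (hm : ∀ j, 0 < m j)
    (hsum : ∑ j, ν j = ∑ j, m j) : discreteKL ν m = 0 ↔ ν = m := by
  have hterm : ∀ j, 0 ≤ ν j / m j := fun j ↦ div_nonneg (hν j) (hm j).le
  rw [discreteKL_eq_sum_mul_klFun hm hsum,
    sum_eq_zero_iff_of_nonneg fun j _ ↦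
      mul_nonneg (hm j).le (InformationTheory.klFun_nonneg (hterm j)), funext_iff]
  refine forall_congr' fun j ↦ ?_
  rw [mul_eq_zero, InformationTheory.klFun_eq_zero_iff (hterm j), div_eq_one_iff_eq (hm j).ne']
  simp [(hm j).ne']

end Gibbs

section GeometricMixture

variable {R I : Type*} [Fintype R] [Fintype I] {μ : I → R → ℝ} {ω : I → ℝ}

lemma sum_mul_log_div_eq_log_div_prod_rpow {x : ℝ} {a : I → ℝ} (hx : 0 < x)
    (ha : ∀ i, 0 < a i) (hω : ∑ i, ω i = 1) :
    ∑ i, ω i * log (x / a i) = log (x / ∏ i, a i ^ ω i) := by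
  rw [log_div hx.ne' (prod_pos fun i _ ↦ rpow_pos_of_pos (ha i) _).ne',
    log_prod fun i _ ↦ (rpow_pos_of_pos (ha i) _).ne']
  simp only [log_div hx.ne' (ha _).ne', log_rpow (ha _), mul_sub, sum_sub_distrib, ← sum_mul, hω]
  ring

lemma sum_mul_discreteKL_eq_discreteKL_normalized_sub_log {ν : R → ℝ} {c : ℝ}
    (hν : ∀ j, 0 < ν j) (hνs : ∑ j, ν j = 1) (hμ : ∀ i j, 0 < μ i j) (hω : ∑ i, ω i = 1)
    (hc : 0 < c) :
    ∑ i, ω i * discreteKL ν (μ i) =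
      discreteKL ν (fun j ↦ (∏ i, μ i j ^ ω i) / c) - log c := by
  have hlog : ∀ j, ∑ i, ω i * log (ν j / μ i j) =
      log (ν j / ((∏ i, μ i j ^ ω i) / c)) - log c := fun j ↦ by
    rw [sum_mul_log_div_eq_log_div_prod_rpow (hν j) (fun i ↦ hμ i j) hω, div_div_eq_mul_div,
      log_div (mul_pos (hν j) hc).ne' (prod_pos fun i _ ↦ rpow_pos_of_pos (hμ i j) _).ne',
      log_div (hν j).ne' (prod_pos fun i _ ↦ rpow_pos_of_pos (hμ i j) _).ne',
      log_mul (hν j).ne' hc.ne']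
    ring
  calc ∑ i, ω i * discreteKL ν (μ i)
      = ∑ j, ν j * ∑ i, ω i * log (ν j / μ i j) := by
        simp only [discreteKL, mul_sum]
        rw [sum_comm]
        exact sum_congr rfl fun j _ ↦ sum_congr rfl fun i _ ↦ by ring
    _ = discreteKL ν (fun j ↦ (∏ i, μ i j ^ ω i) / c) - log c := by
        simp only [hlog, mul_sub, sum_sub_distrib, ← sum_mul, hνs, one_mul, discreteKL]

end GeometricMixture

theorem KL_average_PMF_general
    {R : Type*} [Fintype R] [Nonempty R]
    {I : Type*} [Fintype I]
    (μ : I → R → ℝ) (hμpos : ∀ i j, 0 < μ i j)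
    (ω : I → ℝ) (hωs : ∑ i, ω i = 1)
    (c : ℝ) (hc : c = ∑ t, ∏ i, μ i t ^ ω i)
    (μbar : R → ℝ) (hμbar : ∀ j, μbar j = (∏ i, μ i j ^ ω i) / c) :
    (∀ j, 0 < μbar j) ∧ (∑ j, μbar j = 1) ∧
    ∀ ν : R → ℝ, (∀ j, 0 < ν j) → (∑ j, ν j = 1) →
      (-Real.log c ≤ ∑ i, ω i * ∑ j, ν j * Real.log (ν j / μ i j)) ∧
      ((∑ i, ω i * ∑ j, ν j * Real.log (ν j / μ i j)) = -Real.log c ↔ ν = μbar) := by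
  have hprod : ∀ j, 0 < ∏ i, μ i j ^ ω i := fun j ↦
    prod_pos fun i _ ↦ rpow_pos_of_pos (hμpos i j) _
  have hcpos : 0 < c := hc ▸ sum_pos (fun t _ ↦ hprod t) univ_nonempty
  have hμbar_eq : μbar = fun j ↦ (∏ i, μ i j ^ ω i) / c := funext hμbar
  have hμbar_pos : ∀ j, 0 < μbar j := fun j ↦ hμbar j ▸ div_pos (hprod j) hcpos
  have hμbar_sum : ∑ j, μbar j = 1 := by
    rw [hμbar_eq, ← sum_div, ← hc, div_self hcpos.ne']
  refine ⟨hμbar_pos, hμbar_sum, fun ν hν hνs ↦ ?_⟩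
  have hsum : ∑ j, ν j = ∑ j, μbar j := hνs.trans hμbar_sum.symm
  change -log c ≤ ∑ i, ω i * discreteKL ν (μ i) ∧
    (∑ i, ω i * discreteKL ν (μ i) = -log c ↔ ν = μbar)
  rw [sum_mul_discreteKL_eq_discreteKL_normalized_sub_log hν hνs hμpos hωs hcpos, ← hμbar_eq,
    ← discreteKL_eq_zero_iff (fun j ↦ (hν j).le) hμbar_pos hsum]
  have := discreteKL_nonneg (fun j ↦ (hν j).le) hμbar_pos hsum
  exact ⟨by linarith, fun h ↦ by linarith, fun h ↦ by linarith⟩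

/-- Kullback-Leibler average of PMFs. `μ̄(j) = (1/c) ∏ μᵢ(j)^ωᵢ`
is a strictly positive PMF, the weighted KL cost of any strictly positive PMF
`μ` is at least `−log c`, with equality iff `μ = μ̄`; in particular `μ̄` is the
unique minimizer of the weighted KL cost. -/
theorem KL_average_PMF
    {R : Type*} [Fintype R] [Nonempty R]
    {I : Type*} [Fintype I] [Nonempty I]
    (μ : I → R → ℝ) (hμpos : ∀ i j, 0 < μ i j) (hμsum : ∀ i, ∑ j, μ i j = 1)
    (ω : I → ℝ) (hω : ∀ i, 0 ≤ ω i) (hωs : ∑ i, ω i = 1)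
    (c : ℝ) (hc : c = ∑ t, ∏ i, μ i t ^ ω i)
    (μbar : R → ℝ) (hμbar : ∀ j, μbar j = (∏ i, μ i j ^ ω i) / c) :
    (∀ j, 0 < μbar j) ∧ (∑ j, μbar j = 1) ∧
    ∀ ν : R → ℝ, (∀ j, 0 < ν j) → (∑ j, ν j = 1) →
      (-Real.log c ≤ ∑ i, ω i * ∑ j, ν j * Real.log (ν j / μ i j)) ∧
      ((∑ i, ω i * ∑ j, ν j * Real.log (ν j / μ i j)) = -Real.log c ↔ ν = μbar) :=
  KL_average_PMF_general μ hμpos ω hωs c hc μbar hμbar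
end

section
/- The Kullback–Leibler average of Gaussian densities is Gaussian and is given by the Covariance Intersection fusion rule: let n ≥ 1, let I be a nonempty finite index set, let m_i ∈ ℝ^n and let P_i be symmetric positive definite real n×n matrices (i ∈ I), and let ω_i > 0 be scalars with ∑_{i∈I} ω_i = 1. Define Ω̄ := ∑_{i∈I} ω_i P_i⁻¹ (which is symmetric positive definite), P̄ := Ω̄⁻¹, and m̄ := P̄ (∑_{i∈I} ω_i P_i⁻¹ m_i). Then there exists a constant z > 0 such that for every x ∈ ℝ^n, ∏_{i∈I} N(x; m_i, P_i)^{ω_i} = z · N(x; m̄, P̄); consequently the normalized weighted geometric mean x ↦ ∏_{i∈I} N(x; m_i, P_i)^{ω_i} / ∫_{ℝ^n} ∏_{i∈I} N(y; m_i, P_i)^{ω_i} dy equals N(·; m̄, P̄). -/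
open Matrix MeasureTheory

/-- The Gaussian density `N(x; m, P)` on `ℝⁿ`. -/
noncomputable def gaussN {n : ℕ} (m : Fin n → ℝ) (P : Matrix (Fin n) (Fin n) ℝ)
    (x : Fin n → ℝ) : ℝ :=
  (((2 * Real.pi) • P).det) ^ (-(1 / 2 : ℝ)) *
    Real.exp (-(1 / 2 : ℝ) * ((x - m) ⬝ᵥ (P⁻¹ *ᵥ (x - m))))

/-!
Each factor `N(x; mᵢ, Pᵢ)^ωᵢ` is a constant times `exp (-½ ωᵢ (x - mᵢ)ᵀ Pᵢ⁻¹ (x - mᵢ))`. Since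
`m̄` solves the normal equation `Ω̄ m̄ = ∑ ωᵢ Pᵢ⁻¹ mᵢ`, completing the square turns the sum of
the exponents into `-½ (x - m̄)ᵀ Ω̄ (x - m̄)` plus a constant, so the product is a positive multiple
of `N(x; m̄, P̄)`. Normalising removes that multiple because a Gaussian density integrates to `1`,
which follows from the one-dimensional Gaussian integral by the substitution `y = Q x` with
`Q = √(P⁻¹)`.
-/

open Real

theorem integral_exp_neg_half_dotProduct_self {ι : Type*} [Fintype ι] :
    ∫ y : ι → ℝ, Real.exp (-(1 / 2) * (y ⬝ᵥ y)) = √(2 * π) ^ Fintype.card ι := by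
  have hgauss : ∫ t : ℝ, Real.exp (-(1 / 2) * t ^ 2) = √(2 * π) := by
    rw [integral_gaussian]; congr 1; ring
  simp only [dotProduct, Finset.mul_sum, Real.exp_sum, ← sq]
  rw [volume_pi, integral_fintype_prod_eq_pow (fun t : ℝ => Real.exp (-(1 / 2) * t ^ 2)), hgauss]

namespace Matrix

variable {ι : Type*} [Fintype ι]

theorem IsHermitian.dotProduct_mulVec_comm {A : Matrix ι ι ℝ} (hA : A.IsHermitian)
    (x y : ι → ℝ) : x ⬝ᵥ A *ᵥ y = y ⬝ᵥ A *ᵥ x := by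
  rw [dotProduct_mulVec, dotProduct_comm, ← mulVec_transpose,
    ← conjTranspose_eq_transpose_of_trivial, hA.eq]

theorem IsHermitian.sub_dotProduct_mulVec_sub {A : Matrix ι ι ℝ} (hA : A.IsHermitian)
    (x v : ι → ℝ) :
    (x - v) ⬝ᵥ A *ᵥ (x - v) = x ⬝ᵥ A *ᵥ x - 2 * (v ⬝ᵥ A *ᵥ x) + v ⬝ᵥ A *ᵥ v := by
  rw [mulVec_sub, sub_dotProduct, dotProduct_sub, dotProduct_sub, hA.dotProduct_mulVec_comm x v]
  ring

theorem dotProduct_sum_smul_mulVec {I : Type*} [Fintype I] (w : I → ℝ)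
    (A : I → Matrix ι ι ℝ) (x y : ι → ℝ) :
    x ⬝ᵥ (∑ i, w i • A i) *ᵥ y = ∑ i, w i * (x ⬝ᵥ A i *ᵥ y) := by
  simp only [sum_mulVec, dotProduct_sum, smul_mulVec, dotProduct_smul, smul_eq_mul]

theorem exists_sum_mul_sub_dotProduct_mulVec_sub_eq {I : Type*} [Fintype I] (w : I → ℝ)
    {A : I → Matrix ι ι ℝ} (hA : ∀ i, (A i).IsHermitian) (m : I → ι → ℝ) {mbar : ι → ℝ}
    (hmbar : (∑ i, w i • A i) *ᵥ mbar = ∑ i, w i • (A i *ᵥ m i)) :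
    ∃ c, ∀ x, ∑ i, w i * ((x - m i) ⬝ᵥ A i *ᵥ (x - m i))
      = (x - mbar) ⬝ᵥ (∑ i, w i • A i) *ᵥ (x - mbar) + c := by
  have hAbar : (∑ i, w i • A i).IsHermitian :=
    isSelfAdjoint_sum _ fun i _ => (hA i).smul (IsSelfAdjoint.all (w i))
  have hcross (x : ι → ℝ) :
      mbar ⬝ᵥ (∑ i, w i • A i) *ᵥ x = ∑ i, w i * (m i ⬝ᵥ A i *ᵥ x) := by
    simp only [hAbar.dotProduct_mulVec_comm mbar, hmbar, dotProduct_sum, dotProduct_smul,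
      smul_eq_mul, (hA _).dotProduct_mulVec_comm x]
  refine ⟨∑ i, w i * (m i ⬝ᵥ A i *ᵥ m i) - mbar ⬝ᵥ (∑ i, w i • A i) *ᵥ mbar, fun x => ?_⟩
  simp only [(hA _).sub_dotProduct_mulVec_sub, mul_add, mul_sub, Finset.sum_add_distrib,
    Finset.sum_sub_distrib, hAbar.sub_dotProduct_mulVec_sub, hcross]
  rw [dotProduct_sum_smul_mulVec, Finset.mul_sum]
  simp only [mul_left_comm (w _) 2]
  ring

variable [DecidableEq ι]

open scoped MatrixOrder in
theorem PosDef.exists_det_eq_sqrt_and_dotProduct_mulVec_eq {A : Matrix ι ι ℝ} (hA : A.PosDef) :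
    ∃ Q : Matrix ι ι ℝ, Q.det = √A.det ∧ ∀ x, x ⬝ᵥ A *ᵥ x = (Q *ᵥ x) ⬝ᵥ (Q *ᵥ x) := by
  have hQ : (CFC.sqrt A).IsHermitian := (CFC.sqrt_nonneg A).posSemidef.isHermitian
  refine ⟨CFC.sqrt A, by simpa using hA.posSemidef.det_sqrt, fun x => ?_⟩
  conv_lhs => rw [← CFC.sqrt_mul_sqrt_self A hA.posSemidef.nonneg, ← mulVec_mulVec]
  exact hQ.dotProduct_mulVec_comm _ _

theorem integral_comp_mulVec {E : Type*} [NormedAddCommGroup E] [NormedSpace ℝ E]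
    {A : Matrix ι ι ℝ} (hA : A.det ≠ 0) (g : (ι → ℝ) → E) :
    ∫ x, g (A *ᵥ x) = |A.det|⁻¹ • ∫ y, g y := by
  have hdet : LinearMap.det (toLin' A) ≠ 0 := by rwa [LinearMap.det_toLin']
  have hmap := Measure.map_linearMap_addHaar_pi_eq_smul_addHaar hdet volume
  rw [LinearMap.det_toLin', abs_inv] at hmap
  let e : (ι → ℝ) ≃ᵐ (ι → ℝ) := (A.toLinearEquiv' (invertibleOfIsUnitDet A hA.isUnit))
    |>.toContinuousLinearEquiv.toHomeomorph.toMeasurableEquiv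
  have he : ⇑e = ⇑(toLin' A) := rfl
  have hchange := integral_map_equiv e g (μ := volume)
  rw [he, hmap, integral_smul_measure, ENNReal.toReal_ofReal (by positivity)] at hchange
  simpa [toLin'_apply] using hchange.symm

theorem PosDef.integral_exp_neg_half_dotProduct_mulVec {A : Matrix ι ι ℝ} (hA : A.PosDef) :
    ∫ x, Real.exp (-(1 / 2) * (x ⬝ᵥ A *ᵥ x)) = √((2 * π) ^ Fintype.card ι / A.det) := by
  obtain ⟨Q, hQdet, hQ⟩ := hA.exists_det_eq_sqrt_and_dotProduct_mulVec_eq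
  have hdet : 0 < √A.det := Real.sqrt_pos.mpr hA.det_pos
  have hpow : √((2 * π) ^ Fintype.card ι) = √(2 * π) ^ Fintype.card ι := by
    rw [Real.sqrt_eq_iff_mul_self_eq (by positivity) (by positivity), ← mul_pow,
      Real.mul_self_sqrt (by positivity)]
  simp only [hQ]
  rw [integral_comp_mulVec (hQdet ▸ hdet.ne') (fun y => Real.exp (-(1 / 2) * (y ⬝ᵥ y))),
    integral_exp_neg_half_dotProduct_self, hQdet, abs_of_pos hdet, smul_eq_mul,
    Real.sqrt_div' _ hA.det_pos.le, hpow, inv_mul_eq_div]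

end Matrix

theorem integral_gaussN {n : ℕ} (m : Fin n → ℝ) {P : Matrix (Fin n) (Fin n) ℝ} (hP : P.PosDef) :
    ∫ x, gaussN m P x = 1 := by
  have hdet : ((2 * π) • P).det = (2 * π) ^ n / P⁻¹.det := by
    rw [det_smul, det_nonsing_inv, Ring.inverse_eq_inv', div_inv_eq_mul, Fintype.card_fin]
  have hpos : 0 < ((2 * π) • P).det := (hP.smul two_pi_pos).det_pos
  simp only [gaussN]
  rw [integral_const_mul,
    integral_sub_right_eq_self (fun x => Real.exp (-(1 / 2) * (x ⬝ᵥ P⁻¹ *ᵥ x))),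
    hP.inv.integral_exp_neg_half_dotProduct_mulVec, Fintype.card_fin, ← hdet,
    Real.rpow_neg hpos.le, Real.sqrt_eq_rpow, inv_mul_cancel₀ (by positivity)]

theorem gaussN_rpow {n : ℕ} (m : Fin n → ℝ) {P : Matrix (Fin n) (Fin n) ℝ} (hP : P.PosDef)
    (w : ℝ) (x : Fin n → ℝ) :
    gaussN m P x ^ w = ((2 * π) • P).det ^ (-(1 / 2) * w) *
      Real.exp (-(1 / 2) * (w * ((x - m) ⬝ᵥ P⁻¹ *ᵥ (x - m)))) := by
  have hdet : 0 < ((2 * π) • P).det := (hP.smul two_pi_pos).det_pos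
  rw [gaussN, Real.mul_rpow (by positivity) (Real.exp_pos _).le, ← Real.rpow_mul hdet.le,
    ← Real.exp_mul]
  ring_nf

theorem exists_prod_gaussN_rpow_eq_mul_gaussN {n : ℕ} {I : Type*} [Fintype I]
    (m : I → Fin n → ℝ) {P : I → Matrix (Fin n) (Fin n) ℝ} (hP : ∀ i, (P i).PosDef)
    (ω : I → ℝ) {Pbar : Matrix (Fin n) (Fin n) ℝ} (hPbar : Pbar.PosDef)
    (hPbar_inv : Pbar⁻¹ = ∑ i, ω i • (P i)⁻¹) {mbar : Fin n → ℝ}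
    (hmbar : Pbar⁻¹ *ᵥ mbar = ∑ i, ω i • ((P i)⁻¹ *ᵥ m i)) :
    ∃ z, 0 < z ∧ ∀ x, ∏ i, gaussN (m i) (P i) x ^ ω i = z * gaussN mbar Pbar x := by
  obtain ⟨c, hc⟩ := exists_sum_mul_sub_dotProduct_mulVec_sub_eq ω
    (fun i => (hP i).inv.isHermitian) m (hPbar_inv ▸ hmbar)
  have hdbar : 0 < ((2 * π) • Pbar).det ^ (-(1 / 2 : ℝ)) :=
    Real.rpow_pos_of_pos (hPbar.smul two_pi_pos).det_pos _
  have hD : 0 < ∏ i, ((2 * π) • P i).det ^ (-(1 / 2) * ω i) :=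
    Finset.prod_pos fun i _ => Real.rpow_pos_of_pos ((hP i).smul two_pi_pos).det_pos _
  refine ⟨(∏ i, ((2 * π) • P i).det ^ (-(1 / 2) * ω i)) * Real.exp (-(1 / 2) * c) /
    ((2 * π) • Pbar).det ^ (-(1 / 2 : ℝ)), by positivity, fun x => ?_⟩
  rw [Finset.prod_congr rfl fun i _ => gaussN_rpow (m i) (hP i) (ω i) x, Finset.prod_mul_distrib,
    ← Real.exp_sum, ← Finset.mul_sum, hc x, gaussN, hPbar_inv, mul_add, Real.exp_add]
  field_simp

theorem div_integral_eq_gaussN {n : ℕ} {f : (Fin n → ℝ) → ℝ} {z : ℝ} (hz : z ≠ 0)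
    {m : Fin n → ℝ} {P : Matrix (Fin n) (Fin n) ℝ} (hP : P.PosDef)
    (hf : ∀ x, f x = z * gaussN m P x) (x : Fin n → ℝ) :
    f x / ∫ y, f y = gaussN m P x := by
  simp only [hf]
  rw [integral_const_mul, integral_gaussN m hP, mul_one, mul_div_cancel_left₀ _ hz]

theorem KL_average_gaussian_CI_general
    {n : ℕ} {I : Type*} [Fintype I] [Nonempty I]
    (m : I → (Fin n → ℝ)) (P : I → Matrix (Fin n) (Fin n) ℝ)
    (hP : ∀ i, (P i).PosDef)
    (ω : I → ℝ) (hω : ∀ i, 0 < ω i)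
    (Ωbar Pbar : Matrix (Fin n) (Fin n) ℝ) (mbar : Fin n → ℝ)
    (hΩbar : Ωbar = ∑ i, ω i • (P i)⁻¹)
    (hPbar : Pbar = Ωbar⁻¹)
    (hmbar : mbar = Pbar *ᵥ (∑ i, ω i • ((P i)⁻¹ *ᵥ m i))) :
    Ωbar.PosDef ∧
    (∃ z : ℝ, 0 < z ∧
      ∀ x : Fin n → ℝ, ∏ i, gaussN (m i) (P i) x ^ ω i = z * gaussN mbar Pbar x) ∧
    ∀ x : Fin n → ℝ,
      (∏ i, gaussN (m i) (P i) x ^ ω i) /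
          (∫ y : Fin n → ℝ, ∏ i, gaussN (m i) (P i) y ^ ω i)
        = gaussN mbar Pbar x := by
  have hΩ : Ωbar.PosDef :=
    hΩbar ▸ posDef_sum Finset.univ_nonempty fun i _ => (hP i).inv.smul (hω i)
  have hΩ_unit : IsUnit Ωbar.det := (Matrix.isUnit_iff_isUnit_det _).mp hΩ.isUnit
  have hPbar_inv : Pbar⁻¹ = Ωbar := hPbar ▸ nonsing_inv_nonsing_inv _ hΩ_unit
  have hmbar' : Pbar⁻¹ *ᵥ mbar = ∑ i, ω i • ((P i)⁻¹ *ᵥ m i) := by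
    rw [hPbar_inv, hmbar, hPbar, mulVec_mulVec, mul_nonsing_inv _ hΩ_unit, one_mulVec]
  obtain ⟨z, hz, hprod⟩ := exists_prod_gaussN_rpow_eq_mul_gaussN m hP ω
    (hPbar ▸ hΩ.inv) (hPbar_inv.trans hΩbar) hmbar'
  exact ⟨hΩ, ⟨z, hz, hprod⟩, div_integral_eq_gaussN hz.ne' (hPbar ▸ hΩ.inv) hprod⟩

/-- the Kullback-Leibler average of Gaussian densities is Gaussian
and is given by the Covariance Intersection rule: with `Ω̄ = ∑ ωᵢ Pᵢ⁻¹` (symmetric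
positive definite), `P̄ = Ω̄⁻¹` and `m̄ = P̄ ∑ ωᵢ Pᵢ⁻¹ mᵢ`, the weighted geometric
mean `∏ N(·; mᵢ, Pᵢ)^ωᵢ` equals `z · N(·; m̄, P̄)` for some constant `z > 0`, and
hence its normalization equals `N(·; m̄, P̄)`. -/
theorem KL_average_gaussian_CI
    {n : ℕ} (hn : 1 ≤ n) {I : Type*} [Fintype I] [Nonempty I]
    (m : I → (Fin n → ℝ)) (P : I → Matrix (Fin n) (Fin n) ℝ)
    (hP : ∀ i, (P i).PosDef)
    (ω : I → ℝ) (hω : ∀ i, 0 < ω i) (hωs : ∑ i, ω i = 1)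
    (Ωbar Pbar : Matrix (Fin n) (Fin n) ℝ) (mbar : Fin n → ℝ)
    (hΩbar : Ωbar = ∑ i, ω i • (P i)⁻¹)
    (hPbar : Pbar = Ωbar⁻¹)
    (hmbar : mbar = Pbar *ᵥ (∑ i, ω i • ((P i)⁻¹ *ᵥ m i))) :
    Ωbar.PosDef ∧
    (∃ z : ℝ, 0 < z ∧
      ∀ x : Fin n → ℝ, ∏ i, gaussN (m i) (P i) x ^ ω i = z * gaussN mbar Pbar x) ∧
    ∀ x : Fin n → ℝ,
      (∏ i, gaussN (m i) (P i) x ^ ω i) /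
          (∫ y : Fin n → ℝ, ∏ i, gaussN (m i) (P i) y ^ ω i)
        = gaussN mbar Pbar x :=
  KL_average_gaussian_CI_general m P hP ω hω Ωbar Pbar mbar hΩbar hPbar hmbar
end

section
/- Product of weighted Gaussian components: let n ≥ 1, let m_1, m_2 ∈ ℝ^n, let P_1, P_2 be symmetric positive definite real n×n matrices, and let α_1, α_2 > 0 be scalars. Define P_{12} := (P_1⁻¹ + P_2⁻¹)⁻¹, m_{12} := P_{12}(P_1⁻¹ m_1 + P_2⁻¹ m_2), and α_{12} := α_1 α_2 N(m_1 − m_2; 0, P_1 + P_2). Then P_{12} and P_1 + P_2 are symmetric positive definite and for every x ∈ ℝ^n, α_1 N(x; m_1, P_1) · α_2 N(x; m_2, P_2) = α_{12} N(x; m_{12}, P_{12}). -/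
/-! Write `S = P₁ + P₂` and `e = S⁻¹ (m₁ - m₂)`. Since `P₁⁻¹ + P₂⁻¹ = P₁⁻¹ S P₂⁻¹`, the mean `m₁₂`
satisfies `m₁₂ - m₂ = P₂ e` and `m₁₂ - m₁ = -P₁ e`; in particular
`P₁⁻¹ (m₁₂ - m₁) + P₂⁻¹ (m₁₂ - m₂) = 0`, so completing the square around `m₁₂` kills the cross
terms of the two exponents and leaves the residual `eᵀ P₁ e + eᵀ P₂ e = (m₁ - m₂)ᵀ S⁻¹ (m₁ - m₂)`.
The same factorisation gives `det P₁ · det P₂ = det S · det P₁₂`, which matches the normalising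
constants. -/

open Matrix

namespace Matrix

variable {ι R K : Type*} [Fintype ι] [CommRing R] [Field K]

lemma IsSymm.dotProduct_mulVec_comm {M : Matrix ι ι R} (hM : M.IsSymm) (u v : ι → R) :
    u ⬝ᵥ M *ᵥ v = v ⬝ᵥ M *ᵥ u := by
  rw [dotProduct_mulVec, ← mulVec_transpose, hM.eq, dotProduct_comm]

lemma IsSymm.add_dotProduct_mulVec_add {M : Matrix ι ι R} (hM : M.IsSymm) (u v : ι → R) :
    (u + v) ⬝ᵥ M *ᵥ (u + v) = u ⬝ᵥ M *ᵥ u + 2 * (u ⬝ᵥ M *ᵥ v) + v ⬝ᵥ M *ᵥ v := by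
  rw [mulVec_add, dotProduct_add, add_dotProduct, add_dotProduct,
    hM.dotProduct_mulVec_comm v u]
  ring

lemma quadForm_add_quadForm_of_balance {A B : Matrix ι ι R} (hA : A.IsSymm) (hB : B.IsSymm)
    {m₁ m₂ c : ι → R} (hc : A *ᵥ (c - m₁) + B *ᵥ (c - m₂) = 0) (x : ι → R) :
    (x - m₁) ⬝ᵥ A *ᵥ (x - m₁) + (x - m₂) ⬝ᵥ B *ᵥ (x - m₂) =
      (c - m₁) ⬝ᵥ A *ᵥ (c - m₁) + (c - m₂) ⬝ᵥ B *ᵥ (c - m₂) +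
        (x - c) ⬝ᵥ (A + B) *ᵥ (x - c) := by
  have cross : (x - c) ⬝ᵥ A *ᵥ (c - m₁) + (x - c) ⬝ᵥ B *ᵥ (c - m₂) = 0 := by
    rw [← dotProduct_add, hc, dotProduct_zero]
  rw [← sub_add_sub_cancel x c m₁, ← sub_add_sub_cancel x c m₂,
    hA.add_dotProduct_mulVec_add, hB.add_dotProduct_mulVec_add, add_mulVec, dotProduct_add]
  linear_combination 2 * cross

section InvAddInv

variable [DecidableEq ι] {P₁ P₂ : Matrix ι ι K}

lemma inv_add_inv_eq_inv_mul_add_mul_inv (h₁ : IsUnit P₁.det) (h₂ : IsUnit P₂.det) :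
    P₁⁻¹ + P₂⁻¹ = P₁⁻¹ * (P₁ + P₂) * P₂⁻¹ := by
  rw [mul_add, add_mul, nonsing_inv_mul _ h₁, one_mul, mul_assoc, mul_nonsing_inv _ h₂,
    mul_one, add_comm]

lemma inv_inv_add_inv (h₁ : IsUnit P₁.det) (h₂ : IsUnit P₂.det) :
    (P₁⁻¹ + P₂⁻¹)⁻¹ = P₂ * (P₁ + P₂)⁻¹ * P₁ := by
  rw [inv_add_inv_eq_inv_mul_add_mul_inv h₁ h₂, mul_inv_rev, mul_inv_rev,
    nonsing_inv_nonsing_inv _ h₁, nonsing_inv_nonsing_inv _ h₂, mul_assoc]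

lemma det_add_mul_det_inv_inv_add_inv (h₁ : IsUnit P₁.det) (h₂ : IsUnit P₂.det)
    (hS : IsUnit (P₁ + P₂).det) :
    (P₁ + P₂).det * (P₁⁻¹ + P₂⁻¹)⁻¹.det = P₁.det * P₂.det := by
  rw [inv_inv_add_inv h₁ h₂, det_mul, det_mul, det_nonsing_inv, Ring.inverse_eq_inv']
  field_simp [hS.ne_zero]

lemma inv_inv_add_inv_mulVec_sub (h₁ : IsUnit P₁.det) (h₂ : IsUnit P₂.det)
    (hS : IsUnit (P₁ + P₂).det) (m₁ m₂ : ι → K) :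
    (P₁⁻¹ + P₂⁻¹)⁻¹ *ᵥ (P₁⁻¹ *ᵥ m₁ + P₂⁻¹ *ᵥ m₂) - m₂ = P₂ *ᵥ (P₁ + P₂)⁻¹ *ᵥ (m₁ - m₂) := by
  have weight₁ : (P₁⁻¹ + P₂⁻¹)⁻¹ * P₁⁻¹ = P₂ * (P₁ + P₂)⁻¹ := by
    rw [inv_inv_add_inv h₁ h₂, mul_assoc, mul_nonsing_inv _ h₁, mul_one]
  have weight₂ : (P₁⁻¹ + P₂⁻¹)⁻¹ * P₂⁻¹ = P₁ * (P₁ + P₂)⁻¹ := by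
    rw [add_comm P₁⁻¹, inv_inv_add_inv h₂ h₁, add_comm P₂, mul_assoc, mul_nonsing_inv _ h₂,
      mul_one]
  have split : m₂ = (P₁ * (P₁ + P₂)⁻¹) *ᵥ m₂ + (P₂ * (P₁ + P₂)⁻¹) *ᵥ m₂ := by
    rw [← add_mulVec, ← add_mul, mul_nonsing_inv _ hS, one_mulVec]
  rw [mulVec_add, mulVec_mulVec, mulVec_mulVec, weight₁, weight₂, mulVec_mulVec, mulVec_sub]
  linear_combination -split

lemma quadForm_inv_add_quadForm_inv (hP₁ : P₁.IsSymm) (hP₂ : P₂.IsSymm) (h₁ : IsUnit P₁.det)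
    (h₂ : IsUnit P₂.det) (hS : IsUnit (P₁ + P₂).det) (m₁ m₂ x : ι → K) :
    (x - m₁) ⬝ᵥ P₁⁻¹ *ᵥ (x - m₁) + (x - m₂) ⬝ᵥ P₂⁻¹ *ᵥ (x - m₂) =
      (m₁ - m₂) ⬝ᵥ (P₁ + P₂)⁻¹ *ᵥ (m₁ - m₂) +
        (x - (P₁⁻¹ + P₂⁻¹)⁻¹ *ᵥ (P₁⁻¹ *ᵥ m₁ + P₂⁻¹ *ᵥ m₂)) ⬝ᵥ (P₁⁻¹ + P₂⁻¹) *ᵥ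
          (x - (P₁⁻¹ + P₂⁻¹)⁻¹ *ᵥ (P₁⁻¹ *ᵥ m₁ + P₂⁻¹ *ᵥ m₂)) := by
  set c := (P₁⁻¹ + P₂⁻¹)⁻¹ *ᵥ (P₁⁻¹ *ᵥ m₁ + P₂⁻¹ *ᵥ m₂)
  set e := (P₁ + P₂)⁻¹ *ᵥ (m₁ - m₂)
  have hc₂ : c - m₂ = P₂ *ᵥ e := inv_inv_add_inv_mulVec_sub h₁ h₂ hS m₁ m₂
  have hc₁ : c - m₁ = -(P₁ *ᵥ e) := by
    have := inv_inv_add_inv_mulVec_sub h₂ h₁ (add_comm P₁ P₂ ▸ hS) m₂ m₁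
    rw [add_comm P₂⁻¹, add_comm (P₂⁻¹ *ᵥ m₂), add_comm P₂] at this
    rw [this, ← neg_sub m₁ m₂, mulVec_neg, mulVec_neg]
  have cancel : ∀ {P : Matrix ι ι K}, IsUnit P.det → P⁻¹ *ᵥ P *ᵥ e = e := fun h => by
    rw [mulVec_mulVec, nonsing_inv_mul _ h, one_mulVec]
  have balance : P₁⁻¹ *ᵥ (c - m₁) + P₂⁻¹ *ᵥ (c - m₂) = 0 := by
    rw [hc₁, hc₂, mulVec_neg, cancel h₁, cancel h₂, neg_add_cancel]
  rw [quadForm_add_quadForm_of_balance hP₁.inv hP₂.inv balance, add_left_inj, hc₁, hc₂,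
    mulVec_neg, cancel h₁, cancel h₂, neg_dotProduct_neg, dotProduct_comm (P₁ *ᵥ e),
    dotProduct_comm (P₂ *ᵥ e), ← dotProduct_add, ← add_mulVec, mulVec_mulVec,
    mul_nonsing_inv _ hS, one_mulVec, dotProduct_comm]

end InvAddInv

end Matrix

lemma gaussN_mul_gaussN_eq {n : ℕ} {P₁ P₂ P₃ P₄ : Matrix (Fin n) (Fin n) ℝ}
    {m₁ m₂ m₃ m₄ x₁ x₂ x₃ x₄ : Fin n → ℝ} (h₁ : 0 ≤ P₁.det) (h₂ : 0 ≤ P₂.det)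
    (h₃ : 0 ≤ P₃.det) (h₄ : 0 ≤ P₄.det) (hdet : P₁.det * P₂.det = P₃.det * P₄.det)
    (hq : (x₁ - m₁) ⬝ᵥ P₁⁻¹ *ᵥ (x₁ - m₁) + (x₂ - m₂) ⬝ᵥ P₂⁻¹ *ᵥ (x₂ - m₂) =
      (x₃ - m₃) ⬝ᵥ P₃⁻¹ *ᵥ (x₃ - m₃) + (x₄ - m₄) ⬝ᵥ P₄⁻¹ *ᵥ (x₄ - m₄)) :
    gaussN m₁ P₁ x₁ * gaussN m₂ P₂ x₂ = gaussN m₃ P₃ x₃ * gaussN m₄ P₄ x₄ := by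
  have h2π : 0 ≤ (2 * Real.pi) ^ n := by positivity
  have merge : ∀ {a b : ℝ} (q₁ q₂ : ℝ), 0 ≤ a → 0 ≤ b →
      ((2 * Real.pi) ^ n * a) ^ (-(1 / 2 : ℝ)) * Real.exp (-(1 / 2 : ℝ) * q₁) *
          (((2 * Real.pi) ^ n * b) ^ (-(1 / 2 : ℝ)) * Real.exp (-(1 / 2 : ℝ) * q₂)) =
        ((2 * Real.pi) ^ n * a * ((2 * Real.pi) ^ n * b)) ^ (-(1 / 2 : ℝ)) *
          Real.exp (-(1 / 2 : ℝ) * (q₁ + q₂)) := fun q₁ q₂ ha hb => by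
    rw [Real.mul_rpow (mul_nonneg h2π ha) (mul_nonneg h2π hb), mul_add, Real.exp_add]
    ring
  simp only [gaussN, det_smul, Fintype.card_fin]
  rw [merge _ _ h₁ h₂, merge _ _ h₃ h₄, hq]
  congr 2
  linear_combination ((2 * Real.pi) ^ n) ^ 2 * hdet

theorem mul_weighted_gaussian_general
    {n : ℕ} (m₁ m₂ : Fin n → ℝ)
    (P₁ P₂ : Matrix (Fin n) (Fin n) ℝ) (hP₁ : P₁.PosDef) (hP₂ : P₂.PosDef)
    (α₁ α₂ : ℝ)
    (P₁₂ : Matrix (Fin n) (Fin n) ℝ) (m₁₂ : Fin n → ℝ) (α₁₂ : ℝ)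
    (hP₁₂ : P₁₂ = (P₁⁻¹ + P₂⁻¹)⁻¹)
    (hm₁₂ : m₁₂ = P₁₂ *ᵥ (P₁⁻¹ *ᵥ m₁ + P₂⁻¹ *ᵥ m₂))
    (hα₁₂ : α₁₂ = α₁ * α₂ * gaussN (0 : Fin n → ℝ) (P₁ + P₂) (m₁ - m₂)) :
    P₁₂.PosDef ∧ (P₁ + P₂).PosDef ∧
    ∀ x : Fin n → ℝ,
      (α₁ * gaussN m₁ P₁ x) * (α₂ * gaussN m₂ P₂ x) = α₁₂ * gaussN m₁₂ P₁₂ x := by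
  subst hP₁₂ hm₁₂ hα₁₂
  have hQ : (P₁⁻¹ + P₂⁻¹).PosDef := hP₁.inv.add hP₂.inv
  have hS : (P₁ + P₂).PosDef := hP₁.add hP₂
  refine ⟨hQ.inv, hS, fun x => ?_⟩
  have isSymm {P : Matrix (Fin n) (Fin n) ℝ} (h : P.PosDef) : P.IsSymm :=
    isHermitian_iff_isSymm.mp h.isHermitian
  have isUnit_det {P : Matrix (Fin n) (Fin n) ℝ} (h : P.PosDef) : IsUnit P.det :=
    h.det_pos.ne'.isUnit
  rw [mul_mul_mul_comm, mul_assoc (α₁ * α₂)]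
  congr 1
  refine gaussN_mul_gaussN_eq hP₁.det_pos.le hP₂.det_pos.le hS.det_pos.le hQ.inv.det_pos.le
    (det_add_mul_det_inv_inv_add_inv (isUnit_det hP₁) (isUnit_det hP₂) (isUnit_det hS)).symm ?_
  rw [sub_zero, nonsing_inv_nonsing_inv _ (isUnit_det hQ)]
  exact quadForm_inv_add_quadForm_inv (isSymm hP₁) (isSymm hP₂) (isUnit_det hP₁)
    (isUnit_det hP₂) (isUnit_det hS) m₁ m₂ x

/-- product of weighted Gaussian components:
`α₁N(x; m₁, P₁) · α₂N(x; m₂, P₂) = α₁₂ N(x; m₁₂, P₁₂)` with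
`P₁₂ = (P₁⁻¹ + P₂⁻¹)⁻¹`, `m₁₂ = P₁₂(P₁⁻¹m₁ + P₂⁻¹m₂)` and
`α₁₂ = α₁α₂ N(m₁ − m₂; 0, P₁ + P₂)`; moreover `P₁₂` and `P₁ + P₂` are
symmetric positive definite. -/
theorem mul_weighted_gaussian
    {n : ℕ} (hn : 1 ≤ n) (m₁ m₂ : Fin n → ℝ)
    (P₁ P₂ : Matrix (Fin n) (Fin n) ℝ) (hP₁ : P₁.PosDef) (hP₂ : P₂.PosDef)
    (α₁ α₂ : ℝ) (hα₁ : 0 < α₁) (hα₂ : 0 < α₂)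
    (P₁₂ : Matrix (Fin n) (Fin n) ℝ) (m₁₂ : Fin n → ℝ) (α₁₂ : ℝ)
    (hP₁₂ : P₁₂ = (P₁⁻¹ + P₂⁻¹)⁻¹)
    (hm₁₂ : m₁₂ = P₁₂ *ᵥ (P₁⁻¹ *ᵥ m₁ + P₂⁻¹ *ᵥ m₂))
    (hα₁₂ : α₁₂ = α₁ * α₂ * gaussN (0 : Fin n → ℝ) (P₁ + P₂) (m₁ - m₂)) :
    P₁₂.PosDef ∧ (P₁ + P₂).PosDef ∧
    ∀ x : Fin n → ℝ,
      (α₁ * gaussN m₁ P₁ x) * (α₂ * gaussN m₂ P₂ x) = α₁₂ * gaussN m₁₂ P₁₂ x :=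
  mul_weighted_gaussian_general m₁ m₂ P₁ P₂ hP₁ hP₂ α₁ α₂ P₁₂ m₁₂ α₁₂ hP₁₂ hm₁₂ hα₁₂
end

section
/- Closed form of the consensus iterates: let (Ω, 𝒜, μ) be a σ-finite nonzero measure space, let N ≥ 1, let Π be a real N×N matrix with nonnegative entries whose rows sum to 1 (Π_{ij} ≥ 0, ∑_{j} Π_{ij} = 1 for every i), and let p_0^1, …, p_0^N be μ-a.e. strictly positive, μ-integrable probability densities with respect to μ. Define recursively, for l ≥ 1 and each i, p_l^i(x) := ∏_{j=1}^{N} p_{l-1}^j(x)^{Π_{ij}} / ∫ ∏_{j=1}^{N} p_{l-1}^j(y)^{Π_{ij}} dμ(y). Then all the normalizing integrals appearing in this recursion are finite and strictly positive, and for every l ≥ 0 and every i, p_l^i(x) = ∏_{j=1}^{N} p_0^j(x)^{(Π^l)_{ij}} / ∫ ∏_{j=1}^{N} p_0^j(y)^{(Π^l)_{ij}} dμ(y) for μ-almost every x, where (Π^l)_{ij} denotes the (i,j) entry of the l-th matrix power of Π. -/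
open MeasureTheory Finset Matrix

/-!
The closed form is an invariant of the recursion. Up to a constant factor, the geometric mean with
weights `Mᵢⱼ` of the functions `∏ₖ p₀ₖ ^ (M^l)ⱼₖ` is `∏ₖ p₀ₖ ^ (M^(l+1))ᵢₖ`, by the law of
exponents, and normalizing a function does not see constant factors. The normalizing integrals are
finite by the weighted AM–GM inequality, since the rows of `M^l` are again probability vectors,
and positive because the integrands are a.e. positive and `μ ≠ 0`.
-/

theorem Real.prod_rpow_prod_rpow {ι κ : Type*} [Fintype ι] [Fintype κ] {a : κ → ℝ}
    (ha : ∀ k, 0 < a k) (w : ι → ℝ) (B : ι → κ → ℝ) :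
    ∏ j, (∏ k, a k ^ B j k) ^ w j = ∏ k, a k ^ ∑ j, w j * B j k := calc
  ∏ j, (∏ k, a k ^ B j k) ^ w j = ∏ j, ∏ k, a k ^ (w j * B j k) := by
    refine prod_congr rfl fun j _ => ?_
    rw [← Real.finsetProd_rpow _ _ fun k _ => (Real.rpow_pos_of_pos (ha k) _).le]
    exact prod_congr rfl fun k _ => by rw [← Real.rpow_mul (ha k).le, mul_comm]
  _ = ∏ k, a k ^ ∑ j, w j * B j k := by
    rw [prod_comm]
    exact prod_congr rfl fun k _ => (Real.rpow_sum_of_pos (ha k) _ _).symm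

theorem Real.prod_rpow_one_apply {n : Type*} [Fintype n] [DecidableEq n] (a : n → ℝ) (i : n) :
    ∏ j, a j ^ (1 : Matrix n n ℝ) i j = a i := by
  rw [prod_eq_single i (fun j _ hji => by rw [one_apply_ne' hji, Real.rpow_zero]) (by simp),
    one_apply_eq, Real.rpow_one]

section

variable {Ω : Type*} [MeasurableSpace Ω] {μ : Measure Ω}

theorem integral_pos_of_ae_pos (hμ : μ ≠ 0) {f : Ω → ℝ} (hf : Integrable f μ)
    (hpos : ∀ᵐ x ∂μ, 0 < f x) : 0 < ∫ x, f x ∂μ := by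
  rw [integral_pos_iff_support_of_nonneg_ae (hpos.mono fun _ hx => hx.le) hf, pos_iff_ne_zero,
    Ne, measure_eq_zero_iff_ae_notMem]
  have := ae_neBot.mpr hμ
  intro hnot
  obtain ⟨x, hx, hxpos⟩ := (hnot.and hpos).exists
  exact hx hxpos.ne'

theorem div_integral_ae_eq_of_ae_eq_div {F G : Ω → ℝ} {C : ℝ} (hC : C ≠ 0)
    (hFG : F =ᵐ[μ] fun x => G x / C) :
    (fun x => F x / ∫ y, F y ∂μ) =ᵐ[μ] fun x => G x / ∫ y, G y ∂μ := by
  have hint : ∫ y, F y ∂μ = (∫ y, G y ∂μ) / C := by rw [integral_congr_ae hFG, integral_div]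
  filter_upwards [hFG] with x hx
  rw [hx, hint, div_div_div_cancel_right₀ hC]

variable {ι : Type*} [Fintype ι]

theorem integrable_prod_rpow_of_sum_eq_one {f : ι → Ω → ℝ} {w : ι → ℝ} (hw : ∀ j, 0 ≤ w j)
    (hw₁ : ∑ j, w j = 1) (hf : ∀ j, Integrable (f j) μ) (hf₀ : ∀ j, 0 ≤ᵐ[μ] f j) :
    Integrable (fun x => ∏ j, f j x ^ w j) μ := by
  have hmeas : AEStronglyMeasurable (fun x => ∏ j, f j x ^ w j) μ :=
    (univ.aemeasurable_fun_prod fun j _ => (hf j).aemeasurable.pow_const _).aestronglyMeasurable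
  refine (integrable_finsetSum univ fun j _ => (hf j).const_mul (w j)).mono' hmeas ?_
  filter_upwards [ae_all_iff.mpr hf₀] with x hx
  rw [Real.norm_eq_abs, abs_of_nonneg (prod_nonneg fun j _ => Real.rpow_nonneg (hx j) _)]
  exact Real.geom_mean_le_arith_mean_weighted _ _ _ (fun j _ => hw j) hw₁ fun j _ => hx j

theorem prod_rpow_ae_eq_div_of_ae_eq_div {f g : ι → Ω → ℝ} {c : ι → ℝ} (w : ι → ℝ)
    (hf : ∀ j, 0 ≤ᵐ[μ] f j) (hc : ∀ j, 0 ≤ c j) (hg : ∀ j, g j =ᵐ[μ] fun x => f j x / c j) :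
    (fun x => ∏ j, g j x ^ w j) =ᵐ[μ] fun x => (∏ j, f j x ^ w j) / ∏ j, c j ^ w j := by
  filter_upwards [ae_all_iff.mpr hf, ae_all_iff.mpr hg] with x hfx hgx
  rw [← prod_div_distrib]
  exact prod_congr rfl fun j _ => by rw [hgx j, Real.div_rpow (hfx j) (hc j)]

end

theorem consensus_iterates_closed_form_general
    {Ω : Type*} [MeasurableSpace Ω] (μ : Measure Ω) (hμ : μ ≠ 0)
    {N : ℕ}
    (M : Matrix (Fin N) (Fin N) ℝ)
    (hMnn : ∀ i j, 0 ≤ M i j) (hMrow : ∀ i, ∑ j, M i j = 1)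
    (p₀ : Fin N → Ω → ℝ)
    (hpos : ∀ i, ∀ᵐ x ∂μ, 0 < p₀ i x)
    (hint : ∀ i, Integrable (p₀ i) μ)
    (hone : ∀ i, ∫ x, p₀ i x ∂μ = 1)
    (p : ℕ → Fin N → Ω → ℝ)
    (hp0 : ∀ i, p 0 i = p₀ i)
    (hrec : ∀ l i x, p (l + 1) i x
      = (∏ j, p l j x ^ M i j) / ∫ y, ∏ j, p l j y ^ M i j ∂μ) :
    (∀ l i, Integrable (fun x => ∏ j, p l j x ^ M i j) μ ∧
        0 < ∫ x, ∏ j, p l j x ^ M i j ∂μ) ∧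
    (∀ l i, Integrable (fun x => ∏ j, p₀ j x ^ (M ^ l) i j) μ ∧
        0 < ∫ x, ∏ j, p₀ j x ^ (M ^ l) i j ∂μ) ∧
    ∀ l i, ∀ᵐ x ∂μ, p l i x
      = (∏ j, p₀ j x ^ (M ^ l) i j) / ∫ y, ∏ j, p₀ j y ^ (M ^ l) i j ∂μ := by
  set q : ℕ → Fin N → Ω → ℝ := fun l i x => ∏ j, p₀ j x ^ (M ^ l) i j with hq
  have hstoch (l : ℕ) : M ^ l ∈ rowStochastic ℝ (Fin N) :=
    pow_mem (mem_rowStochastic_iff_sum.mpr ⟨hMnn, hMrow⟩) l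
  have hp₀_pos : ∀ᵐ x ∂μ, ∀ j, 0 < p₀ j x := ae_all_iff.mpr hpos
  have hq_pos (l i) : ∀ᵐ x ∂μ, 0 < q l i x :=
    hp₀_pos.mono fun x hx => prod_pos fun j _ => Real.rpow_pos_of_pos (hx j) _
  have hq_int (l i) : Integrable (q l i) μ :=
    integrable_prod_rpow_of_sum_eq_one (fun _ => nonneg_of_mem_rowStochastic (hstoch l))
      (sum_row_of_mem_rowStochastic (hstoch l) i) hint fun j => (hpos j).mono fun _ hx => hx.le
  have hZ_pos (l i) : 0 < ∫ x, q l i x ∂μ := integral_pos_of_ae_pos hμ (hq_int l i) (hq_pos l i)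
  have hC_pos (l i) : 0 < ∏ j, (∫ y, q l j y ∂μ) ^ M i j :=
    prod_pos fun j _ => Real.rpow_pos_of_pos (hZ_pos l j) _
  have hq_succ (l i) : (fun x => ∏ j, q l j x ^ M i j) =ᵐ[μ] q (l + 1) i :=
    hp₀_pos.mono fun x hx => by
      simp only [hq, pow_succ', mul_apply]
      exact Real.prod_rpow_prod_rpow hx _ _
  have hstep (l i) (h : ∀ j, p l j =ᵐ[μ] fun x => q l j x / ∫ y, q l j y ∂μ) :
      (fun x => ∏ j, p l j x ^ M i j)
        =ᵐ[μ] fun x => q (l + 1) i x / ∏ j, (∫ y, q l j y ∂μ) ^ M i j := by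
    filter_upwards [prod_rpow_ae_eq_div_of_ae_eq_div (M i)
      (fun j => (hq_pos l j).mono fun _ hx => hx.le) (fun j => (hZ_pos l j).le) h, hq_succ l i]
      with x hx hsucc
    rw [hx, hsucc]
  have hclosed (l i) : p l i =ᵐ[μ] fun x => q l i x / ∫ y, q l i y ∂μ := by
    induction l generalizing i with
    | zero => simp [hq, hp0, hone, Real.prod_rpow_one_apply]
    | succ l ih =>
      rw [funext (hrec l i)]
      exact div_integral_ae_eq_of_ae_eq_div (hC_pos l i).ne' (hstep l i ih)
  refine ⟨fun l i => ?_, fun l i => ⟨hq_int l i, hZ_pos l i⟩, hclosed⟩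
  have h := hstep l i (hclosed l)
  rw [integrable_congr h, integral_congr_ae h, integral_div]
  exact ⟨(hq_int (l + 1) i).div_const _, div_pos (hZ_pos (l + 1) i) (hC_pos l i)⟩

/-- closed form of the consensus iterates. If each consensus
iterate is obtained by the normalized weighted geometric mean of the previous
iterates with weights given by a row-stochastic matrix `M`, then all the
normalizing integrals are finite and strictly positive and the `l`-th iterate
is the normalized weighted geometric mean of the initial densities with weights
given by the entries of the matrix power `M^l`. -/
theorem consensus_iterates_closed_form
    {Ω : Type*} [MeasurableSpace Ω] (μ : Measure Ω) [SigmaFinite μ] (hμ : μ ≠ 0)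
    {N : ℕ} (hN : 1 ≤ N)
    (M : Matrix (Fin N) (Fin N) ℝ)
    (hMnn : ∀ i j, 0 ≤ M i j) (hMrow : ∀ i, ∑ j, M i j = 1)
    (p₀ : Fin N → Ω → ℝ)
    (hmeas : ∀ i, Measurable (p₀ i))
    (hnn : ∀ i x, 0 ≤ p₀ i x)
    (hpos : ∀ i, ∀ᵐ x ∂μ, 0 < p₀ i x)
    (hint : ∀ i, Integrable (p₀ i) μ)
    (hone : ∀ i, ∫ x, p₀ i x ∂μ = 1)
    (p : ℕ → Fin N → Ω → ℝ)
    (hp0 : ∀ i, p 0 i = p₀ i)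
    (hrec : ∀ l i x, p (l + 1) i x
      = (∏ j, p l j x ^ M i j) / ∫ y, ∏ j, p l j y ^ M i j ∂μ) :
    (∀ l i, Integrable (fun x => ∏ j, p l j x ^ M i j) μ ∧
        0 < ∫ x, ∏ j, p l j x ^ M i j ∂μ) ∧
    (∀ l i, Integrable (fun x => ∏ j, p₀ j x ^ (M ^ l) i j) μ ∧
        0 < ∫ x, ∏ j, p₀ j x ^ (M ^ l) i j ∂μ) ∧
    ∀ l i, ∀ᵐ x ∂μ, p l i x
      = (∏ j, p₀ j x ^ (M ^ l) i j) / ∫ y, ∏ j, p₀ j y ^ (M ^ l) i j ∂μ :=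
  consensus_iterates_closed_form_general μ hμ M hMnn hMrow p₀ hpos hint hone p hp0 hrec
end

section
/- Normalization constant of the weighted geometric mean of two labeled multi-Bernoulli parameter families: let (X, 𝒜, μ) be a measure space, let 𝕃 be a finite set, let ω ∈ (0,1), and for i = 1, 2 let r_i : 𝕃 → (0,1) and let p_i(ℓ, ·) : X → [0,∞) be measurable probability densities with respect to μ for each ℓ ∈ 𝕃. Define w_i(L) := ∏_{ℓ∈𝕃∖L}(1 − r_i(ℓ)) · ∏_{ℓ∈L} r_i(ℓ) for L ⊆ 𝕃, and set r̃(ℓ) := ∫ (r_1(ℓ) p_1(ℓ,x))^{ω} (r_2(ℓ) p_2(ℓ,x))^{1−ω} dμ(x) and q̃(ℓ) := (1 − r_1(ℓ))^{ω} (1 − r_2(ℓ))^{1−ω}. Then ∑_{L ⊆ 𝕃} w_1(L)^{ω} w_2(L)^{1−ω} ∏_{ℓ∈L} ∫ p_1(ℓ,x)^{ω} p_2(ℓ,x)^{1−ω} dμ(x) = ∏_{ℓ∈𝕃} (q̃(ℓ) + r̃(ℓ)). -/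
open MeasureTheory

/-- normalization constant of the weighted geometric mean of two
labeled multi-Bernoulli parameter families:
`∑_{L ⊆ 𝕃} w₁(L)^ω w₂(L)^{1−ω} ∏_{ℓ∈L} ∫ p₁^ω p₂^{1−ω} dμ = ∏_{ℓ∈𝕃} (q̃(ℓ) + r̃(ℓ))`. -/
theorem LMB_geometric_mean_normalization
    {X : Type*} [MeasurableSpace X] (μ : Measure X)
    {L : Type*} [Fintype L] [DecidableEq L]
    (ω : ℝ) (hω : ω ∈ Set.Ioo (0 : ℝ) 1)
    (r₁ r₂ : L → ℝ)
    (hr₁ : ∀ ℓ, r₁ ℓ ∈ Set.Ioo (0 : ℝ) 1) (hr₂ : ∀ ℓ, r₂ ℓ ∈ Set.Ioo (0 : ℝ) 1)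
    (p₁ p₂ : L → X → ℝ)
    (hm₁ : ∀ ℓ, Measurable (p₁ ℓ)) (hm₂ : ∀ ℓ, Measurable (p₂ ℓ))
    (hn₁ : ∀ ℓ x, 0 ≤ p₁ ℓ x) (hn₂ : ∀ ℓ x, 0 ≤ p₂ ℓ x)
    (ho₁ : ∀ ℓ, ∫ x, p₁ ℓ x ∂μ = 1) (ho₂ : ∀ ℓ, ∫ x, p₂ ℓ x ∂μ = 1)
    (w₁ w₂ : Finset L → ℝ)
    (hw₁ : ∀ S, w₁ S = (∏ ℓ ∈ Finset.univ \ S, (1 - r₁ ℓ)) * ∏ ℓ ∈ S, r₁ ℓ)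
    (hw₂ : ∀ S, w₂ S = (∏ ℓ ∈ Finset.univ \ S, (1 - r₂ ℓ)) * ∏ ℓ ∈ S, r₂ ℓ)
    (rt qt : L → ℝ)
    (hrt : ∀ ℓ, rt ℓ = ∫ x, (r₁ ℓ * p₁ ℓ x) ^ ω * (r₂ ℓ * p₂ ℓ x) ^ (1 - ω) ∂μ)
    (hqt : ∀ ℓ, qt ℓ = (1 - r₁ ℓ) ^ ω * (1 - r₂ ℓ) ^ (1 - ω)) :
    ∑ S ∈ Finset.univ.powerset,
        w₁ S ^ ω * w₂ S ^ (1 - ω) * ∏ ℓ ∈ S, ∫ x, p₁ ℓ x ^ ω * p₂ ℓ x ^ (1 - ω) ∂μ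
      = ∏ ℓ, (qt ℓ + rt ℓ) := by

  have key : ∀ S : Finset L,
      w₁ S ^ ω * w₂ S ^ (1 - ω) * ∏ ℓ ∈ S, ∫ x, p₁ ℓ x ^ ω * p₂ ℓ x ^ (1 - ω) ∂μ
        = (∏ ℓ ∈ S, rt ℓ) * ∏ ℓ ∈ Finset.univ \ S, qt ℓ := by
    intro S
    have hrt' : ∀ ℓ, rt ℓ =
        (r₁ ℓ ^ ω * r₂ ℓ ^ (1 - ω)) * ∫ x, p₁ ℓ x ^ ω * p₂ ℓ x ^ (1 - ω) ∂μ := by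
      intro ℓ
      rw [hrt]
      have h : ∀ x, (r₁ ℓ * p₁ ℓ x) ^ ω * (r₂ ℓ * p₂ ℓ x) ^ (1 - ω)
          = (r₁ ℓ ^ ω * r₂ ℓ ^ (1 - ω)) * (p₁ ℓ x ^ ω * p₂ ℓ x ^ (1 - ω)) := by
        intro x
        rw [Real.mul_rpow (le_of_lt (hr₁ ℓ).1) (hn₁ ℓ x),
          Real.mul_rpow (le_of_lt (hr₂ ℓ).1) (hn₂ ℓ x)]
        ring
      simp_rw [h]
      rw [integral_const_mul]
    rw [hw₁, hw₂]
    rw [Real.mul_rpow (Finset.prod_nonneg fun ℓ _ => by linarith [(hr₁ ℓ).2])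
        (Finset.prod_nonneg fun ℓ _ => le_of_lt (hr₁ ℓ).1),
      Real.mul_rpow (Finset.prod_nonneg fun ℓ _ => by linarith [(hr₂ ℓ).2])
        (Finset.prod_nonneg fun ℓ _ => le_of_lt (hr₂ ℓ).1),
      ← Real.finset_prod_rpow _ _ (fun ℓ _ => by linarith [(hr₁ ℓ).2]),
      ← Real.finset_prod_rpow _ _ (fun ℓ _ => le_of_lt (hr₁ ℓ).1),
      ← Real.finset_prod_rpow _ _ (fun ℓ _ => by linarith [(hr₂ ℓ).2]),
      ← Real.finset_prod_rpow _ _ (fun ℓ _ => le_of_lt (hr₂ ℓ).1)]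
    simp_rw [hrt', hqt, Finset.prod_mul_distrib]
    ring
  simp_rw [key]
  have : (∏ ℓ, (qt ℓ + rt ℓ)) = ∏ ℓ, (rt ℓ + qt ℓ) := by
    simp [add_comm]
  rw [this, Finset.prod_add]
end

section
/- The normalized weighted geometric mean of two labeled multi-Bernoulli parameter families is labeled multi-Bernoulli: let (X, 𝒜, μ) be a measure space, let 𝕃 be a finite set, let ω ∈ (0,1), and for i = 1, 2 let r_i : 𝕃 → (0,1) and let p_i(ℓ, ·) be measurable probability densities with respect to μ for each ℓ ∈ 𝕃, with w_i(L) := ∏_{ℓ∈𝕃∖L}(1 − r_i(ℓ)) ∏_{ℓ∈L} r_i(ℓ). Set r̃(ℓ) := ∫ (r_1(ℓ) p_1(ℓ,x))^{ω} (r_2(ℓ) p_2(ℓ,x))^{1−ω} dμ(x), q̃(ℓ) := (1 − r_1(ℓ))^{ω}(1 − r_2(ℓ))^{1−ω}, and r̄(ℓ) := r̃(ℓ)/(q̃(ℓ) + r̃(ℓ)). Then q̃(ℓ) + r̃(ℓ) > 0 for every ℓ, r̄(ℓ) ∈ [0,1), and for every L ⊆ 𝕃, w_1(L)^{ω} w_2(L)^{1−ω}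 ∏_{ℓ∈L} ∫ p_1(ℓ,x)^{ω} p_2(ℓ,x)^{1−ω} dμ(x) / ∏_{ℓ∈𝕃}(q̃(ℓ) + r̃(ℓ)) = ∏_{ℓ∈𝕃∖L}(1 − r̄(ℓ)) · ∏_{ℓ∈L} r̄(ℓ); i.e., the fused weights are exactly the weights of the labeled multi-Bernoulli family with existence probabilities r̄. -/
open MeasureTheory

/-- the normalized weighted geometric mean of two labeled
multi-Bernoulli parameter families is labeled multi-Bernoulli: with
`r̃(ℓ) = ∫ (r₁p₁)^ω (r₂p₂)^{1−ω} dμ`, `q̃(ℓ) = (1−r₁)^ω (1−r₂)^{1−ω}` and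
`r̄(ℓ) = r̃(ℓ)/(q̃(ℓ)+r̃(ℓ))`, one has `q̃(ℓ)+r̃(ℓ) > 0`, `r̄(ℓ) ∈ [0,1)`, and
the normalized fused weights coincide with the LMB weights of `r̄`. -/
theorem LMB_geometric_mean_is_LMB
    {X : Type*} [MeasurableSpace X] (μ : Measure X)
    {L : Type*} [Fintype L] [DecidableEq L]
    (ω : ℝ) (hω : ω ∈ Set.Ioo (0 : ℝ) 1)
    (r₁ r₂ : L → ℝ)
    (hr₁ : ∀ ℓ, r₁ ℓ ∈ Set.Ioo (0 : ℝ) 1) (hr₂ : ∀ ℓ, r₂ ℓ ∈ Set.Ioo (0 : ℝ) 1)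
    (p₁ p₂ : L → X → ℝ)
    (hm₁ : ∀ ℓ, Measurable (p₁ ℓ)) (hm₂ : ∀ ℓ, Measurable (p₂ ℓ))
    (hn₁ : ∀ ℓ x, 0 ≤ p₁ ℓ x) (hn₂ : ∀ ℓ x, 0 ≤ p₂ ℓ x)
    (ho₁ : ∀ ℓ, ∫ x, p₁ ℓ x ∂μ = 1) (ho₂ : ∀ ℓ, ∫ x, p₂ ℓ x ∂μ = 1)
    (w₁ w₂ : Finset L → ℝ)
    (hw₁ : ∀ S, w₁ S = (∏ ℓ ∈ Finset.univ \ S, (1 - r₁ ℓ)) * ∏ ℓ ∈ S, r₁ ℓ)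
    (hw₂ : ∀ S, w₂ S = (∏ ℓ ∈ Finset.univ \ S, (1 - r₂ ℓ)) * ∏ ℓ ∈ S, r₂ ℓ)
    (rt qt rb : L → ℝ)
    (hrt : ∀ ℓ, rt ℓ = ∫ x, (r₁ ℓ * p₁ ℓ x) ^ ω * (r₂ ℓ * p₂ ℓ x) ^ (1 - ω) ∂μ)
    (hqt : ∀ ℓ, qt ℓ = (1 - r₁ ℓ) ^ ω * (1 - r₂ ℓ) ^ (1 - ω))
    (hrb : ∀ ℓ, rb ℓ = rt ℓ / (qt ℓ + rt ℓ)) :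
    (∀ ℓ, 0 < qt ℓ + rt ℓ) ∧
    (∀ ℓ, 0 ≤ rb ℓ ∧ rb ℓ < 1) ∧
    ∀ S : Finset L,
      w₁ S ^ ω * w₂ S ^ (1 - ω) *
          (∏ ℓ ∈ S, ∫ x, p₁ ℓ x ^ ω * p₂ ℓ x ^ (1 - ω) ∂μ) /
          (∏ ℓ, (qt ℓ + rt ℓ))
        = (∏ ℓ ∈ Finset.univ \ S, (1 - rb ℓ)) * ∏ ℓ ∈ S, rb ℓ := by
  obtain ⟨hω0, hω1⟩ := hω
  have h1ω : 0 < 1 - ω := by linarith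
  set I : L → ℝ := fun ℓ => ∫ x, p₁ ℓ x ^ ω * p₂ ℓ x ^ (1 - ω) ∂μ with hI
  have hInn : ∀ ℓ, 0 ≤ I ℓ := fun ℓ =>
    integral_nonneg fun x => mul_nonneg (Real.rpow_nonneg (hn₁ ℓ x) _) (Real.rpow_nonneg (hn₂ ℓ x) _)
  have hrt' : ∀ ℓ, rt ℓ = r₁ ℓ ^ ω * r₂ ℓ ^ (1 - ω) * I ℓ := by
    intro ℓ
    have key : ∀ x, (r₁ ℓ * p₁ ℓ x) ^ ω * (r₂ ℓ * p₂ ℓ x) ^ (1 - ω)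
        = (r₁ ℓ ^ ω * r₂ ℓ ^ (1 - ω)) * (p₁ ℓ x ^ ω * p₂ ℓ x ^ (1 - ω)) := by
      intro x
      rw [Real.mul_rpow (hr₁ ℓ).1.le (hn₁ ℓ x), Real.mul_rpow (hr₂ ℓ).1.le (hn₂ ℓ x)]
      ring
    rw [hrt ℓ]
    simp_rw [key]
    rw [integral_const_mul]
  have hrtnn : ∀ ℓ, 0 ≤ rt ℓ := by
    intro ℓ
    rw [hrt' ℓ]
    exact mul_nonneg (mul_nonneg (Real.rpow_nonneg (hr₁ ℓ).1.le _)
      (Real.rpow_nonneg (hr₂ ℓ).1.le _)) (hInn ℓ)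
  have hqtpos : ∀ ℓ, 0 < qt ℓ := by
    intro ℓ
    rw [hqt ℓ]
    exact mul_pos (Real.rpow_pos_of_pos (by linarith [(hr₁ ℓ).2]) _)
      (Real.rpow_pos_of_pos (by linarith [(hr₂ ℓ).2]) _)
  have hd : ∀ ℓ, 0 < qt ℓ + rt ℓ := fun ℓ => by linarith [hqtpos ℓ, hrtnn ℓ]
  refine ⟨hd, fun ℓ => ⟨by rw [hrb ℓ]; exact div_nonneg (hrtnn ℓ) (hd ℓ).le, ?_⟩, ?_⟩
  · rw [hrb ℓ, div_lt_one (hd ℓ)]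
    linarith [hqtpos ℓ]
  intro S
  have hrbrw : ∀ ℓ, 1 - rb ℓ = qt ℓ / (qt ℓ + rt ℓ) := by
    intro ℓ
    rw [hrb ℓ, eq_div_iff (hd ℓ).ne', sub_mul, div_mul_cancel₀ _ (hd ℓ).ne']
    ring
  have hw1 : w₁ S ^ ω = (∏ ℓ ∈ Finset.univ \ S, (1 - r₁ ℓ) ^ ω) * ∏ ℓ ∈ S, r₁ ℓ ^ ω := by
    rw [hw₁ S, Real.mul_rpow (Finset.prod_nonneg fun ℓ _ => by linarith [(hr₁ ℓ).2])
      (Finset.prod_nonneg fun ℓ _ => (hr₁ ℓ).1.le),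
      ← Real.finset_prod_rpow _ _ (fun ℓ _ => by linarith [(hr₁ ℓ).2]),
      ← Real.finset_prod_rpow _ _ (fun ℓ _ => (hr₁ ℓ).1.le)]
  have hw2 : w₂ S ^ (1 - ω) = (∏ ℓ ∈ Finset.univ \ S, (1 - r₂ ℓ) ^ (1 - ω)) * ∏ ℓ ∈ S, r₂ ℓ ^ (1 - ω) := by
    rw [hw₂ S, Real.mul_rpow (Finset.prod_nonneg fun ℓ _ => by linarith [(hr₂ ℓ).2])
      (Finset.prod_nonneg fun ℓ _ => (hr₂ ℓ).1.le),
      ← Real.finset_prod_rpow _ _ (fun ℓ _ => by linarith [(hr₂ ℓ).2]),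
      ← Real.finset_prod_rpow _ _ (fun ℓ _ => (hr₂ ℓ).1.le)]
  have hnum : w₁ S ^ ω * w₂ S ^ (1 - ω) * ∏ ℓ ∈ S, I ℓ
      = (∏ ℓ ∈ Finset.univ \ S, qt ℓ) * ∏ ℓ ∈ S, rt ℓ := by
    rw [hw1, hw2]
    rw [show (∏ ℓ ∈ Finset.univ \ S, qt ℓ) = ∏ ℓ ∈ Finset.univ \ S, (1 - r₁ ℓ) ^ ω * (1 - r₂ ℓ) ^ (1 - ω)
      from Finset.prod_congr rfl fun ℓ _ => hqt ℓ,
      show (∏ ℓ ∈ S, rt ℓ) = ∏ ℓ ∈ S, r₁ ℓ ^ ω * r₂ ℓ ^ (1 - ω) * I ℓ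
      from Finset.prod_congr rfl fun ℓ _ => hrt' ℓ,
      Finset.prod_mul_distrib, Finset.prod_mul_distrib, Finset.prod_mul_distrib]
    ring
  have hsplit : (∏ ℓ, (qt ℓ + rt ℓ)) = (∏ ℓ ∈ Finset.univ \ S, (qt ℓ + rt ℓ)) * ∏ ℓ ∈ S, (qt ℓ + rt ℓ) := by
    rw [← Finset.prod_sdiff (Finset.subset_univ S)]
  calc w₁ S ^ ω * w₂ S ^ (1 - ω) * (∏ ℓ ∈ S, I ℓ) / ∏ ℓ, (qt ℓ + rt ℓ)
      = ((∏ ℓ ∈ Finset.univ \ S, qt ℓ) * ∏ ℓ ∈ S, rt ℓ) /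
        ((∏ ℓ ∈ Finset.univ \ S, (qt ℓ + rt ℓ)) * ∏ ℓ ∈ S, (qt ℓ + rt ℓ)) := by
        rw [hnum, hsplit]
    _ = (∏ ℓ ∈ Finset.univ \ S, qt ℓ / (qt ℓ + rt ℓ)) * ∏ ℓ ∈ S, rt ℓ / (qt ℓ + rt ℓ) := by
        rw [Finset.prod_div_distrib, Finset.prod_div_distrib, div_mul_div_comm]
    _ = (∏ ℓ ∈ Finset.univ \ S, (1 - rb ℓ)) * ∏ ℓ ∈ S, rb ℓ := by
        rw [Finset.prod_congr rfl fun ℓ _ => (hrbrw ℓ).symm,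
          Finset.prod_congr rfl fun ℓ _ => (hrb ℓ).symm]
end

section
/- Factorization of the weighted geometric mean of marginalized δ-GLMB components: let 𝕃 be a finite set, let I be a nonempty finite index set, let ω_i > 0 (i ∈ I) with ∑_{i∈I} ω_i = 1, let (X, 𝒜, μ) be a measure space, and for each i ∈ I and each L ⊆ 𝕃 let w_i^{(L)} ≥ 0 and let p_i^{(L)}(·, ℓ) : X → (0,∞) be a measurable probability density with respect to μ for each ℓ ∈ L. Assume that for each L ⊆ 𝕃 and ℓ ∈ L, c_L(ℓ) := ∫ ∏_{i∈I} p_i^{(L)}(x, ℓ)^{ω_i} dμ(x) satisfies 0 < c_L(ℓ) < ∞, and define p̄^{(L)}(x, ℓ) := ∏_{i∈I} p_i^{(L)}(x, ℓ)^{ω_i} / c_L(ℓ) and w̃^{(L)} := ∏_{i∈I} (w_i^{(L)})^{ω_i} · ∏_{ℓ∈L} c_L(ℓ). Then for every L ⊆ 𝕃 and every family (x_ℓ)_{ℓ∈L} of points of X, ∏_{i∈I} ( w_i^{(L)} ∏_{ℓ∈L} p_i^{(L)}(x_ℓ, ℓ) )^{ω_i} = w̃^{(L)} · ∏_{ℓ∈L}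 p̄^{(L)}(x_ℓ, ℓ); in particular each p̄^{(L)}(·, ℓ) is a probability density, so the normalized weighted geometric mean of marginalized δ-GLMB densities is again of marginalized δ-GLMB form with weights proportional to w̃^{(L)} and single-object densities p̄^{(L)}. -/
open MeasureTheory

/-- factorization of the weighted geometric mean of marginalized
δ-GLMB components: with `c_L(ℓ) = ∫ ∏ᵢ pᵢ^{(L)}(x,ℓ)^{ωᵢ} dμ`,
`p̄^{(L)}(x,ℓ) = ∏ᵢ pᵢ^{(L)}(x,ℓ)^{ωᵢ}/c_L(ℓ)` and
`w̃^{(L)} = ∏ᵢ (wᵢ^{(L)})^{ωᵢ} ∏_{ℓ∈L} c_L(ℓ)`, one has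
`∏ᵢ (wᵢ^{(L)} ∏_{ℓ∈L} pᵢ^{(L)}(x_ℓ,ℓ))^{ωᵢ} = w̃^{(L)} ∏_{ℓ∈L} p̄^{(L)}(x_ℓ,ℓ)`;
and each `p̄^{(L)}(·,ℓ)` is a probability density. -/
theorem MdGLMB_geometric_mean_factorization
    {L : Type*} [Fintype L] {ι : Type*} [Fintype ι] [Nonempty ι]
    (ω : ι → ℝ) (hω : ∀ i, 0 < ω i) (hωs : ∑ i, ω i = 1)
    {X : Type*} [MeasurableSpace X] (μ : Measure X)
    (w : ι → Finset L → ℝ) (hwnn : ∀ i S, 0 ≤ w i S)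
    (p : ι → Finset L → L → X → ℝ)
    (hmeas : ∀ i S, ∀ ℓ ∈ S, Measurable (p i S ℓ))
    (hpos : ∀ i S, ∀ ℓ ∈ S, ∀ x, 0 < p i S ℓ x)
    (hone : ∀ i S, ∀ ℓ ∈ S, ∫ x, p i S ℓ x ∂μ = 1)
    (c : Finset L → L → ℝ)
    (hc : ∀ S ℓ, c S ℓ = ∫ x, ∏ i, p i S ℓ x ^ ω i ∂μ)
    (hcpos : ∀ S, ∀ ℓ ∈ S, 0 < c S ℓ)
    (hcfin : ∀ S, ∀ ℓ ∈ S, Integrable (fun x => ∏ i, p i S ℓ x ^ ω i) μ)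
    (pbar : Finset L → L → X → ℝ)
    (hpbar : ∀ S ℓ x, pbar S ℓ x = (∏ i, p i S ℓ x ^ ω i) / c S ℓ)
    (wt : Finset L → ℝ)
    (hwt : ∀ S, wt S = (∏ i, w i S ^ ω i) * ∏ ℓ ∈ S, c S ℓ) :
    (∀ (S : Finset L) (x : L → X),
        ∏ i, (w i S * ∏ ℓ ∈ S, p i S ℓ (x ℓ)) ^ ω i
          = wt S * ∏ ℓ ∈ S, pbar S ℓ (x ℓ)) ∧
    ∀ S : Finset L, ∀ ℓ ∈ S, ∫ x, pbar S ℓ x ∂μ = 1 := by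
  constructor
  · intro S x
    have key : ∀ i, (w i S * ∏ ℓ ∈ S, p i S ℓ (x ℓ)) ^ ω i
        = w i S ^ ω i * ∏ ℓ ∈ S, p i S ℓ (x ℓ) ^ ω i := by
      intro i
      rw [Real.mul_rpow (hwnn i S)
        (Finset.prod_nonneg fun ℓ hℓ => (hpos i S ℓ hℓ (x ℓ)).le),
        ← Real.finset_prod_rpow S _ (fun ℓ hℓ => (hpos i S ℓ hℓ (x ℓ)).le)]
    rw [Finset.prod_congr rfl fun i _ => key i, Finset.prod_mul_distrib,
      Finset.prod_comm, hwt S, mul_assoc, ← Finset.prod_mul_distrib]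
    congr 1
    apply Finset.prod_congr rfl
    intro ℓ hℓ
    rw [hpbar, mul_div_cancel₀]
    exact (hcpos S ℓ hℓ).ne'
  · intro S ℓ hℓ
    have : ∫ x, pbar S ℓ x ∂μ = (∫ x, ∏ i, p i S ℓ x ^ ω i ∂μ) / c S ℓ := by
      simp only [hpbar, div_eq_mul_inv]
      rw [integral_mul_const]
    rw [this, ← hc, div_self (hcpos S ℓ hℓ).ne']
end
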